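/- Let X ~ P_X on 𝒳 and S ~ θ on 𝒮 be independent, let W = S − X with pmf ξ, and let Y be drawn given W according to the structured policy b with respect to (θ, ξ). Then I(W; Y) = I(W; X) = H(W) − H(S). -/

import Mathlib

open Finset
open scoped Classical

namespace SmartMeter

/-! ### Basic information measures for finitely supported distributions.
All entropies and mutual informations are in bits (base-2 logarithms). -/

/-- Probability that the random variable `Z` takes the value `z` under the pmf `p`. -/
noncomputable def pr {Ω α : Type*} [Fintype Ω] [DecidableEq α]
    (p : Ω → ℝ) (Z : Ω → α) (z : α) : ℝ :=
  ∑ ω ∈ Finset.univ.filter (fun ω => Z ω = z), p ω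

/-- Shannon entropy (in bits) of the random variable `Z` under the pmf `p`. -/
noncomputable def ent {Ω α : Type*} [Fintype Ω] [DecidableEq α]
    (p : Ω → ℝ) (Z : Ω → α) : ℝ :=
  -∑ z ∈ Finset.univ.image Z, pr p Z z * Real.logb 2 (pr p Z z)

/-- Mutual information `I(A; B)`. -/
noncomputable def mutInfo {Ω α β : Type*} [Fintype Ω] [DecidableEq α] [DecidableEq β]
    (p : Ω → ℝ) (A : Ω → α) (B : Ω → β) : ℝ :=
  ent p A + ent p B - ent p (fun ω => (A ω, B ω))

/-- Conditional entropy `H(A | C)`. -/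
noncomputable def condEnt {Ω α γ : Type*} [Fintype Ω] [DecidableEq α] [DecidableEq γ]
    (p : Ω → ℝ) (A : Ω → α) (C : Ω → γ) : ℝ :=
  ent p (fun ω => (A ω, C ω)) - ent p C

/-- Conditional mutual information `I(A; B | C)`. -/
noncomputable def condMutInfo {Ω α β γ : Type*} [Fintype Ω] [DecidableEq α] [DecidableEq β]
    [DecidableEq γ] (p : Ω → ℝ) (A : Ω → α) (B : Ω → β) (C : Ω → γ) : ℝ :=
  ent p (fun ω => (A ω, C ω)) + ent p (fun ω => (B ω, C ω))
    - ent p (fun ω => (A ω, B ω, C ω)) - ent p C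

/-- `p` is a probability mass function on the finite type `Ω`. -/
def IsPMF {Ω : Type*} [Fintype Ω] (p : Ω → ℝ) : Prop :=
  (∀ ω, 0 ≤ p ω) ∧ ∑ ω, p ω = 1

/-- Extension of a pmf on `{0, …, n}` to an integer-indexed function (zero out of range). -/
noncomputable def extZ {n : ℕ} (f : Fin (n + 1) → ℝ) (k : ℤ) : ℝ :=
  if h : 0 ≤ k ∧ k ≤ (n : ℤ) then f ⟨k.toNat, by omega⟩ else 0

/-! ### The single-letter quantity `J*` -/

/-- `I(S - X; X)` for independent `X ~ PX` on `{0,…,mx}` and `S ~ θ` on `{0,…,ms}`. -/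
noncomputable def iidMI (mx ms : ℕ) (PX : Fin (mx + 1) → ℝ) (θ : Fin (ms + 1) → ℝ) : ℝ :=
  mutInfo (fun ω : Fin (mx + 1) × Fin (ms + 1) => PX ω.1 * θ ω.2)
    (fun ω => ((ω.2 : ℕ) : ℤ) - ((ω.1 : ℕ) : ℤ)) (fun ω => ω.1)

/-- `J* = min over pmfs θ on 𝒮 of I(S - X; X)`. -/
noncomputable def Jstar (mx ms : ℕ) (PX : Fin (mx + 1) → ℝ) : ℝ :=
  sInf {r : ℝ | ∃ θ : Fin (ms + 1) → ℝ, IsPMF θ ∧ iidMI mx ms PX θ = r}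

/-! ### The structured policy `b*` -/

/-- `ξ(w) = Σ_{(x,s) : s - x = w} PX(x) θ(s)`, the pmf of `W = S - X`. -/
noncomputable def xiOf (mx ms : ℕ) (PX : Fin (mx + 1) → ℝ) (θ : Fin (ms + 1) → ℝ)
    (w : ℤ) : ℝ :=
  ∑ x : Fin (mx + 1), ∑ s : Fin (ms + 1),
    if ((s : ℕ) : ℤ) - ((x : ℕ) : ℤ) = w then PX x * θ s else 0

/-- The structured policy with respect to `(θ, ξ)`:
`b(y|w) = PX(y) θ(y + w) / ξ(w)` for `y ∈ 𝒳 ∩ 𝒴₀(w)` (when `ξ(w) > 0`), else `0`. -/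
noncomputable def bstar (mx my ms : ℕ) (PX : Fin (mx + 1) → ℝ) (θ : Fin (ms + 1) → ℝ)
    (w : ℤ) (y : Fin (my + 1)) : ℝ :=
  if xiOf mx ms PX θ w = 0 then 0
  else extZ PX ((y : ℕ) : ℤ) * extZ θ (((y : ℕ) : ℤ) + w) / xiOf mx ms PX θ w

/-! ### Trajectory spaces, policies and induced joint laws.
Time is indexed from `0`; `ω = (s₁, x, y)` records the initial battery state `S₁ = ω.1`,
the demands `X_{t+1} = ω.2.1 t` and the outputs `Y_{t+1} = ω.2.2 t` for `t = 0, …, T-1`. -/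

/-- Trajectories of horizon `T`. -/
abbrev Traj (mx my ms T : ℕ) :=
  Fin (ms + 1) × (Fin T → Fin (mx + 1)) × (Fin T → Fin (my + 1))

variable {mx my ms T : ℕ}

/-- Demand at (0-based) time `t`, as an integer (junk value `0` for `t ≥ T`). -/
def Xat (ω : Traj mx my ms T) (t : ℕ) : ℤ :=
  if h : t < T then ((ω.2.1 ⟨t, h⟩ : ℕ) : ℤ) else 0

/-- Output at (0-based) time `t`, as an integer (junk value `0` for `t ≥ T`). -/
def Yat (ω : Traj mx my ms T) (t : ℕ) : ℤ :=
  if h : t < T then ((ω.2.2 ⟨t, h⟩ : ℕ) : ℤ) else 0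

/-- Battery state at (0-based) time `t`: `S_{t+1} = S_t + Y_t - X_t`, `Sat ω 0 = S₁`. -/
def Sat (ω : Traj mx my ms T) (t : ℕ) : ℤ :=
  ((ω.1 : ℕ) : ℤ) + ∑ i ∈ Finset.range t, (Yat ω i - Xat ω i)

/-- `W_t = S_t - X_t`. -/
def Wat (ω : Traj mx my ms T) (t : ℕ) : ℤ := Sat ω t - Xat ω t

/-- A general causal (class `Q_A`) randomized battery policy:
`q_t(y_t | x^t, s^t, y^{t-1})`; since `s^t` is determined by `(s₁, x^{t-1}, y^{t-1})`,
the policy is a function of `(x^t, s₁, y^{t-1})`. -/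
def PolicyA (mx my ms : ℕ) : Type :=
  (t : ℕ) → (Fin (t + 1) → Fin (mx + 1)) → Fin (ms + 1) → (Fin t → Fin (my + 1)) →
    Fin (my + 1) → ℝ

/-- A class-`Q_B` policy: `q_t(y_t | x_t, s_t, y^{t-1})`. -/
def PolicyB (mx my ms : ℕ) : Type :=
  (t : ℕ) → Fin (mx + 1) → ℤ → (Fin t → Fin (my + 1)) → Fin (my + 1) → ℝ

/-- The battery state `S_t` computed from `s₁` and the history `(x^t, y^{t-1})`. -/
def hstate {t : ℕ} (s1 : Fin (ms + 1)) (x : Fin (t + 1) → Fin (mx + 1))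
    (y : Fin t → Fin (my + 1)) : ℤ :=
  ((s1 : ℕ) : ℤ) + ∑ i : Fin t, (((y i : ℕ) : ℤ) - ((x i.castSucc : ℕ) : ℤ))

/-- Each `q_t(· | x^t, s^t, y^{t-1})` is a pmf on `𝒴`. -/
def CondPMFA (q : PolicyA mx my ms) : Prop :=
  ∀ (t : ℕ) (x : Fin (t + 1) → Fin (mx + 1)) (s1 : Fin (ms + 1)) (y : Fin t → Fin (my + 1)),
    (∀ yt, 0 ≤ q t x s1 y yt) ∧ ∑ yt, q t x s1 y yt = 1

/-- Feasibility of a class-`Q_A` policy: conditional pmfs supported on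
`𝒴₀(s_t - x_t) = {y ∈ 𝒴 : s_t - x_t + y ∈ 𝒮}`. -/
def FeasibleA (q : PolicyA mx my ms) : Prop :=
  CondPMFA q ∧
  ∀ (t : ℕ) (x : Fin (t + 1) → Fin (mx + 1)) (s1 : Fin (ms + 1)) (y : Fin t → Fin (my + 1)),
    ∀ yt, q t x s1 y yt ≠ 0 →
      0 ≤ hstate s1 x y - ((x (Fin.last t) : ℕ) : ℤ) + ((yt : ℕ) : ℤ) ∧
      hstate s1 x y - ((x (Fin.last t) : ℕ) : ℤ) + ((yt : ℕ) : ℤ) ≤ (ms : ℤ)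

/-- Each `q_t(· | x_t, s_t, y^{t-1})` is a pmf on `𝒴`. -/
def CondPMFB (q : PolicyB mx my ms) : Prop :=
  ∀ (t : ℕ) (xt : Fin (mx + 1)) (s : ℤ) (y : Fin t → Fin (my + 1)),
    (∀ yt, 0 ≤ q t xt s y yt) ∧ ∑ yt, q t xt s y yt = 1

/-- Feasibility of a class-`Q_B` policy. -/
def FeasibleB (q : PolicyB mx my ms) : Prop :=
  CondPMFB q ∧
  ∀ (t : ℕ) (xt : Fin (mx + 1)) (s : ℤ) (y : Fin t → Fin (my + 1)),
    0 ≤ s → s ≤ (ms : ℤ) →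
    ∀ yt, q t xt s y yt ≠ 0 →
      0 ≤ s - ((xt : ℕ) : ℤ) + ((yt : ℕ) : ℤ) ∧
      s - ((xt : ℕ) : ℤ) + ((yt : ℕ) : ℤ) ≤ (ms : ℤ)

/-- The demand prefix `x^t = (x_0, …, x_t)` of a trajectory. -/
def prefX (ω : Traj mx my ms T) (t : Fin T) : Fin ((t : ℕ) + 1) → Fin (mx + 1) :=
  fun i => ω.2.1 ⟨(i : ℕ), lt_of_le_of_lt (Nat.lt_succ_iff.mp i.isLt) t.isLt⟩

/-- The output prefix `y^{t-1} = (y_0, …, y_{t-1})` of a trajectory. -/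
def prefY (ω : Traj mx my ms T) (t : Fin T) : Fin (t : ℕ) → Fin (my + 1) :=
  fun i => ω.2.2 ⟨(i : ℕ), i.isLt.trans t.isLt⟩

/-- Joint law on trajectories induced by i.i.d. demand `PX`, initial battery pmf `PS1`
(independent of the demand), and a class-`Q_A` policy `q`. -/
noncomputable def jointA (PS1 : Fin (ms + 1) → ℝ) (PX : Fin (mx + 1) → ℝ)
    (q : PolicyA mx my ms) (T : ℕ) (ω : Traj mx my ms T) : ℝ :=
  PS1 ω.1 * ∏ t : Fin T,
    (PX (ω.2.1 t) * q (t : ℕ) (prefX ω t) ω.1 (prefY ω t) (ω.2.2 t))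

/-- Weight of a demand trajectory under a Markov chain `(PX1, Qm)`. -/
noncomputable def markovWt (PX1 : Fin (mx + 1) → ℝ) (Qm : Fin (mx + 1) → Fin (mx + 1) → ℝ)
    {T : ℕ} (x : Fin T → Fin (mx + 1)) : ℝ :=
  ∏ t : Fin T,
    if _h : (t : ℕ) = 0 then PX1 (x t)
    else Qm (x ⟨(t : ℕ) - 1, lt_of_le_of_lt (Nat.sub_le _ _) t.isLt⟩) (x t)

/-- Joint law on trajectories induced by Markov demand and a class-`Q_A` policy. -/
noncomputable def jointAMarkov (PS1 : Fin (ms + 1) → ℝ) (PX1 : Fin (mx + 1) → ℝ)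
    (Qm : Fin (mx + 1) → Fin (mx + 1) → ℝ) (q : PolicyA mx my ms) (T : ℕ)
    (ω : Traj mx my ms T) : ℝ :=
  PS1 ω.1 * markovWt PX1 Qm ω.2.1 *
    ∏ t : Fin T, q (t : ℕ) (prefX ω t) ω.1 (prefY ω t) (ω.2.2 t)

/-- Joint law on trajectories induced by Markov demand and a class-`Q_B` policy. -/
noncomputable def jointBMarkov (PS1 : Fin (ms + 1) → ℝ) (PX1 : Fin (mx + 1) → ℝ)
    (Qm : Fin (mx + 1) → Fin (mx + 1) → ℝ) (q : PolicyB mx my ms) (T : ℕ)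
    (ω : Traj mx my ms T) : ℝ :=
  PS1 ω.1 * markovWt PX1 Qm ω.2.1 *
    ∏ t : Fin T, q (t : ℕ) (ω.2.1 t) (Sat ω (t : ℕ)) (prefY ω t) (ω.2.2 t)

/-- The memoryless time-invariant policy `q_t(y | x, s) = b*(y | s - x)`, as a member of the
class of general causal policies. -/
noncomputable def structuredPolicyA (mx my ms : ℕ) (PX : Fin (mx + 1) → ℝ)
    (θ : Fin (ms + 1) → ℝ) : PolicyA mx my ms :=
  fun t x s1 y yt => bstar mx my ms PX θ (hstate s1 x y - ((x (Fin.last t) : ℕ) : ℤ)) yt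


/-! Under the structured policy the pair `(W, Y)` has the same law as `(W, X)`: both put mass
`P_X(y) θ(y + w)` on `(w, y)`, since `ξ(w) b(y | w)` is that mass by construction of `b`. Hence
`I(W; Y) = I(W; X)`. Moreover `(W, X)` is an injective image of the independent pair `(X, S)`, so
`H(W, X) = H(X) + H(S)` and `I(W; X) = H(W) - H(S)`. -/

section Law

variable {Ω Ω' α β : Type*} [Fintype Ω] [Fintype Ω'] [DecidableEq α] [DecidableEq β]

lemma pr_nonneg {p : Ω → ℝ} (hp : ∀ ω, 0 ≤ p ω) (Z : Ω → α) (z : α) : 0 ≤ pr p Z z :=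
  Finset.sum_nonneg fun ω _ => hp ω

lemma le_pr_apply {p : Ω → ℝ} (hp : ∀ ω, 0 ≤ p ω) (Z : Ω → α) (ω : Ω) : p ω ≤ pr p Z (Z ω) :=
  Finset.single_le_sum (fun ω _ => hp ω) (Finset.mem_filter.mpr ⟨Finset.mem_univ ω, rfl⟩)

lemma pr_eq_zero_of_notMem_image {p : Ω → ℝ} {Z : Ω → α} {z : α}
    (hz : z ∉ Finset.univ.image Z) : pr p Z z = 0 :=
  Finset.sum_eq_zero fun ω hω => absurd
    (Finset.mem_image.mpr ⟨ω, Finset.mem_univ ω, (Finset.mem_filter.mp hω).2⟩) hz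

lemma pr_comp_eq_sum (p : Ω → ℝ) (Z : Ω → α) (g : α → β) (y : β) {T : Finset α}
    (hT : ∀ ω, Z ω ∈ T) : pr p (fun ω => g (Z ω)) y = ∑ z ∈ T with g z = y, pr p Z z := by
  simp only [pr]
  rw [Finset.sum_fiberwise_eq_sum_filter]
  congr 1
  ext ω
  simp [hT ω]

lemma pr_comp_congr {p : Ω → ℝ} {p' : Ω' → ℝ} {Z : Ω → α} {Z' : Ω' → α}
    (h : ∀ z, pr p Z z = pr p' Z' z) (g : α → β) (y : β) :
    pr p (fun ω => g (Z ω)) y = pr p' (fun ω => g (Z' ω)) y := by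
  rw [pr_comp_eq_sum p Z g y (T := Finset.univ.image Z ∪ Finset.univ.image Z')
      fun ω => Finset.mem_union_left _ (Finset.mem_image_of_mem Z (Finset.mem_univ ω)),
    pr_comp_eq_sum p' Z' g y
      fun ω => Finset.mem_union_right _ (Finset.mem_image_of_mem Z' (Finset.mem_univ ω))]
  exact Finset.sum_congr rfl fun z _ => h z

lemma sum_pr [Fintype α] (p : Ω → ℝ) (Z : Ω → α) : ∑ z, pr p Z z = ∑ ω, p ω :=
  Finset.sum_fiberwise Finset.univ Z p

lemma sum_pr_pair [Fintype β] (p : Ω → ℝ) (A : Ω → α) (B : Ω → β) (a : α) :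
    ∑ b, pr p (fun ω => (A ω, B ω)) (a, b) = pr p A a := by
  rw [pr, ← Finset.sum_fiberwise _ B]
  refine Finset.sum_congr rfl fun b _ => ?_
  rw [pr, Finset.filter_filter]
  simp only [Prod.mk.injEq]

lemma pr_pair_le {p : Ω → ℝ} (hp : ∀ ω, 0 ≤ p ω) (A : Ω → α) (B : Ω → β) (a : α) (b : β) :
    pr p (fun ω => (A ω, B ω)) (a, b) ≤ pr p A a :=
  Finset.sum_le_sum_of_subset_of_nonneg (fun ω hω => by
    simp only [Finset.mem_filter, Prod.mk.injEq] at hω ⊢; exact ⟨hω.1, hω.2.1⟩)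
    fun ω _ _ => hp ω

lemma pr_comp_equiv (e : Ω' ≃ Ω) (p : Ω → ℝ) (Z : Ω → α) (z : α) :
    pr (fun ω => p (e ω)) (fun ω => Z (e ω)) z = pr p Z z := by
  simp only [pr, Finset.sum_filter]
  exact e.sum_comp fun ω => if Z ω = z then p ω else 0

end Law

section Entropy

variable {Ω Ω' α β : Type*} [Fintype Ω] [Fintype Ω'] [DecidableEq α] [DecidableEq β]

lemma ent_eq_sum_of_subset (p : Ω → ℝ) (Z : Ω → α) {T : Finset α}
    (hT : Finset.univ.image Z ⊆ T) :
    ent p Z = -∑ z ∈ T, pr p Z z * Real.logb 2 (pr p Z z) := by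
  rw [ent, Finset.sum_subset hT fun z _ hz => by rw [pr_eq_zero_of_notMem_image hz, zero_mul]]

lemma ent_congr {p : Ω → ℝ} {p' : Ω' → ℝ} {Z : Ω → α} {Z' : Ω' → α}
    (h : ∀ z, pr p Z z = pr p' Z' z) : ent p Z = ent p' Z' := by
  set T := Finset.univ.image Z ∪ Finset.univ.image Z'
  rw [ent_eq_sum_of_subset p Z (T := T) Finset.subset_union_left,
    ent_eq_sum_of_subset p' Z' (T := T) Finset.subset_union_right]
  simp only [h]

lemma ent_comp_injective (p : Ω → ℝ) (Z : Ω → α) {e : α → β} (he : Function.Injective e) :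
    ent p (fun ω => e (Z ω)) = ent p Z := by
  have hpr : ∀ z, pr p (fun ω => e (Z ω)) (e z) = pr p Z z := fun z => by
    simp only [pr, he.eq_iff]
  have himg : Finset.univ.image (fun ω => e (Z ω)) = (Finset.univ.image Z).image e := by
    rw [Finset.image_image]; rfl
  rw [ent, ent, himg, Finset.sum_image fun a _ b _ h => he h]
  simp only [hpr]

lemma ent_comp_equiv (e : Ω' ≃ Ω) (p : Ω → ℝ) (Z : Ω → α) :
    ent (fun ω => p (e ω)) (fun ω => Z (e ω)) = ent p Z :=
  ent_congr (pr_comp_equiv e p Z)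

lemma mul_logb_mul (x y : ℝ) :
    x * y * Real.logb 2 (x * y) = y * (x * Real.logb 2 x) + x * (y * Real.logb 2 y) := by
  rcases eq_or_ne x 0 with rfl | hx
  · simp
  rcases eq_or_ne y 0 with rfl | hy
  · simp
  rw [Real.logb_mul hx hy]
  ring

lemma ent_pair_eq_add_of_indep [Fintype α] [Fintype β] {p : Ω → ℝ} (hp : ∑ ω, p ω = 1)
    {A : Ω → α} {B : Ω → β}
    (hAB : ∀ a b, pr p (fun ω => (A ω, B ω)) (a, b) = pr p A a * pr p B b) :
    ent p (fun ω => (A ω, B ω)) = ent p A + ent p B := by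
  simp only [ent_eq_sum_of_subset _ _ (Finset.subset_univ _), Fintype.sum_prod_type, hAB,
    mul_logb_mul, Finset.sum_add_distrib, ← Finset.sum_mul, ← Finset.mul_sum, sum_pr, hp]
  ring

lemma mutInfo_congr {p : Ω → ℝ} {p' : Ω' → ℝ} {A : Ω → α} {B : Ω → β} {A' : Ω' → α}
    {B' : Ω' → β}
    (h : ∀ ab, pr p (fun ω => (A ω, B ω)) ab = pr p' (fun ω => (A' ω, B' ω)) ab) :
    mutInfo p A B = mutInfo p' A' B' := by
  rw [mutInfo, mutInfo, ent_congr (pr_comp_congr h Prod.fst),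
    ent_congr (pr_comp_congr h Prod.snd), ent_congr h]

lemma mutInfo_comp_right_injective (p : Ω → ℝ) (A : Ω → α) (B : Ω → β) {γ : Type*}
    [DecidableEq γ] {e : β → γ} (he : Function.Injective e) :
    mutInfo p A (fun ω => e (B ω)) = mutInfo p A B := by
  rw [mutInfo, mutInfo, ent_comp_injective p B he,
    ← ent_comp_injective p (fun ω => (A ω, B ω)) (Function.injective_id.prodMap he)]
  rfl

lemma mutInfo_comp_equiv (e : Ω' ≃ Ω) (p : Ω → ℝ) (A : Ω → α) (B : Ω → β) :
    mutInfo (fun ω => p (e ω)) (fun ω => A (e ω)) (fun ω => B (e ω)) = mutInfo p A B := by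
  rw [mutInfo, mutInfo, ent_comp_equiv, ent_comp_equiv,
    ent_comp_equiv e p fun ω => (A ω, B ω)]

end Entropy

section Channel

variable {A W C α : Type*} [Fintype A] [Fintype C] [DecidableEq α]

noncomputable def channelLaw (μ : A → ℝ) (f : A → W) (κ : W → C → ℝ) (ω : A × C) : ℝ :=
  μ ω.1 * κ (f ω.1) ω.2

lemma pr_channelLaw_fst {μ : A → ℝ} {f : A → W} {κ : W → C → ℝ}
    (hκ : ∀ a, μ a ≠ 0 → ∑ c, κ (f a) c = 1) (Z : A → α) (z : α) :
    pr (channelLaw μ f κ) (fun ω => Z ω.1) z = pr μ Z z := by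
  simp only [pr, Finset.sum_filter, Fintype.sum_prod_type, channelLaw]
  refine Finset.sum_congr rfl fun a _ => ?_
  split_ifs
  · rcases eq_or_ne (μ a) 0 with h0 | h0
    · simp [h0]
    · rw [← Finset.mul_sum, hκ a h0, mul_one]
  · exact Finset.sum_const_zero

lemma pr_channelLaw_pair [DecidableEq W] [DecidableEq C] (μ : A → ℝ) (f : A → W)
    (κ : W → C → ℝ) (w : W) (c : C) :
    pr (channelLaw μ f κ) (fun ω => (f ω.1, ω.2)) (w, c) = pr μ f w * κ w c := by
  simp only [pr, Finset.sum_filter, Fintype.sum_prod_type, channelLaw, Prod.mk.injEq,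
    Finset.sum_mul]
  refine Finset.sum_congr rfl fun a _ => ?_
  split_ifs with ha
  · subst ha
    simp
  · simp [ha]

end Channel

section Product

variable {A B : Type*} [Fintype A] [Fintype B]

lemma pr_mul_fst [DecidableEq A] (P : A → ℝ) {Q : B → ℝ} (hQ : ∑ b, Q b = 1) (a : A) :
    pr (fun ω : A × B => P ω.1 * Q ω.2) Prod.fst a = P a := by
  simp [pr, Finset.sum_filter, Fintype.sum_prod_type, ← Finset.mul_sum, hQ]

lemma pr_mul_snd [DecidableEq B] {P : A → ℝ} (hP : ∑ a, P a = 1) (Q : B → ℝ) (b : B) :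
    pr (fun ω : A × B => P ω.1 * Q ω.2) Prod.snd b = Q b := by
  simp [pr, Finset.sum_filter, Fintype.sum_prod_type, ← Finset.sum_mul, hP]

lemma pr_mul_pair [DecidableEq A] [DecidableEq B] (P : A → ℝ) (Q : B → ℝ) (a : A) (b : B) :
    pr (fun ω : A × B => P ω.1 * Q ω.2) (fun ω => (ω.1, ω.2)) (a, b) = P a * Q b := by
  simp [pr, Finset.sum_filter]

end Product

lemma extZ_eq_sum_ite {n : ℕ} (f : Fin (n + 1) → ℝ) (k : ℤ) :
    extZ f k = ∑ i : Fin (n + 1), if ((i : ℕ) : ℤ) = k then f i else 0 := by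
  unfold extZ
  split_ifs with hk
  · rw [Finset.sum_eq_single_of_mem ⟨k.toNat, by omega⟩ (Finset.mem_univ _)]
    · exact (if_pos (Int.toNat_of_nonneg hk.1)).symm
    · intro i _ hi
      rw [if_neg]
      exact fun h => hi (Fin.ext (show (i : ℕ) = k.toNat by omega))
  · refine (Finset.sum_eq_zero fun i _ => if_neg ?_).symm
    have := i.isLt
    omega

section StructuredPolicy

variable {PX : Fin (mx + 1) → ℝ} {θ : Fin (ms + 1) → ℝ}

noncomputable def indepLaw (PX : Fin (mx + 1) → ℝ) (θ : Fin (ms + 1) → ℝ)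
    (a : Fin (mx + 1) × Fin (ms + 1)) : ℝ :=
  PX a.1 * θ a.2

def sSubX (a : Fin (mx + 1) × Fin (ms + 1)) : ℤ := ((a.2 : ℕ) : ℤ) - ((a.1 : ℕ) : ℤ)

noncomputable def structuredLaw (mx my ms : ℕ) (PX : Fin (mx + 1) → ℝ)
    (θ : Fin (ms + 1) → ℝ) :
    (Fin (mx + 1) × Fin (ms + 1)) × Fin (my + 1) → ℝ :=
  channelLaw (indepLaw PX θ) sSubX (bstar mx my ms PX θ)

lemma pr_sSubX (w : ℤ) : pr (indepLaw PX θ) sSubX w = xiOf mx ms PX θ w := by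
  rw [pr, Finset.sum_filter, Fintype.sum_prod_type]
  rfl

lemma pr_sSubX_castLE (hxy : mx ≤ my) (w : ℤ) (y : Fin (my + 1)) :
    pr (indepLaw PX θ) (fun a => (sSubX a, Fin.castLE (Nat.succ_le_succ hxy) a.1)) (w, y)
      = extZ PX ((y : ℕ) : ℤ) * extZ θ (((y : ℕ) : ℤ) + w) := by
  rw [extZ_eq_sum_ite PX ((y : ℕ) : ℤ), Finset.sum_mul, pr, Finset.sum_filter,
    Fintype.sum_prod_type]
  refine Finset.sum_congr rfl fun x _ => ?_
  by_cases hx : ((x : ℕ) : ℤ) = ((y : ℕ) : ℤ)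
  · rw [if_pos hx, extZ_eq_sum_ite θ, Finset.mul_sum]
    refine Finset.sum_congr rfl fun s _ => ?_
    simp only [Prod.mk.injEq, Fin.ext_iff, Fin.val_castLE, indepLaw, sSubX, mul_ite, mul_zero]
    congr 1
    exact propext ⟨fun h => by omega, fun h => ⟨by omega, by omega⟩⟩
  · rw [if_neg hx, zero_mul]
    refine Finset.sum_eq_zero fun s _ => if_neg ?_
    simp only [Prod.mk.injEq, Fin.ext_iff, Fin.val_castLE]
    omega

lemma indepLaw_nonneg (hPX : ∀ x, 0 ≤ PX x) (hθ : ∀ s, 0 ≤ θ s)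
    (a : Fin (mx + 1) × Fin (ms + 1)) : 0 ≤ indepLaw PX θ a :=
  mul_nonneg (hPX a.1) (hθ a.2)

lemma xiOf_mul_bstar (hxy : mx ≤ my) (hPX : ∀ x, 0 ≤ PX x) (hθ : ∀ s, 0 ≤ θ s) (w : ℤ)
    (y : Fin (my + 1)) :
    xiOf mx ms PX θ w * bstar mx my ms PX θ w y
      = extZ PX ((y : ℕ) : ℤ) * extZ θ (((y : ℕ) : ℤ) + w) := by
  by_cases hξ : xiOf mx ms PX θ w = 0
  -- here `bstar` is the junk value `0`, and so is the right side, being a mass below `ξ(w) = 0`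
  · have hle := pr_pair_le (indepLaw_nonneg hPX hθ) sSubX
      (fun a => Fin.castLE (Nat.succ_le_succ hxy) a.1) w y
    have hnonneg := pr_nonneg (indepLaw_nonneg hPX hθ)
      (fun a => (sSubX a, Fin.castLE (Nat.succ_le_succ hxy) a.1)) (w, y)
    rw [pr_sSubX_castLE hxy, pr_sSubX, hξ] at hle
    rw [pr_sSubX_castLE hxy] at hnonneg
    rw [hξ, zero_mul]
    linarith
  · rw [bstar, if_neg hξ, mul_div_cancel₀ _ hξ]

lemma sum_bstar (hxy : mx ≤ my) {w : ℤ} (hξ : xiOf mx ms PX θ w ≠ 0) :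
    ∑ y, bstar mx my ms PX θ w y = 1 := by
  simp only [bstar, if_neg hξ, ← Finset.sum_div, ← pr_sSubX_castLE hxy, sum_pr_pair,
    pr_sSubX, div_self hξ]

lemma sum_bstar_sSubX (hxy : mx ≤ my) (hPX : ∀ x, 0 ≤ PX x) (hθ : ∀ s, 0 ≤ θ s)
    (a : Fin (mx + 1) × Fin (ms + 1)) (ha : indepLaw PX θ a ≠ 0) :
    ∑ y, bstar mx my ms PX θ (sSubX a) y = 1 := by
  refine sum_bstar hxy (ne_of_gt ?_)
  rw [← pr_sSubX]
  exact (lt_of_le_of_ne (indepLaw_nonneg hPX hθ a) ha.symm).trans_le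
    (le_pr_apply (indepLaw_nonneg hPX hθ) sSubX a)

lemma pr_structuredLaw_fst (hxy : mx ≤ my) (hPX : ∀ x, 0 ≤ PX x) (hθ : ∀ s, 0 ≤ θ s)
    {α : Type*} [DecidableEq α] (Z : Fin (mx + 1) × Fin (ms + 1) → α) (z : α) :
    pr (structuredLaw mx my ms PX θ) (fun ω => Z ω.1) z = pr (indepLaw PX θ) Z z :=
  pr_channelLaw_fst (sum_bstar_sSubX hxy hPX hθ) Z z

lemma mutInfo_structuredLaw_snd (hxy : mx ≤ my) (hPX : ∀ x, 0 ≤ PX x) (hθ : ∀ s, 0 ≤ θ s) :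
    mutInfo (structuredLaw mx my ms PX θ) (fun ω => sSubX ω.1) (fun ω => ω.2)
      = mutInfo (structuredLaw mx my ms PX θ) (fun ω => sSubX ω.1) (fun ω => ω.1.1) := by
  have hle : mx + 1 ≤ my + 1 := Nat.succ_le_succ hxy
  have hlaw : ∀ wy : ℤ × Fin (my + 1),
      pr (structuredLaw mx my ms PX θ) (fun ω => (sSubX ω.1, ω.2)) wy
        = pr (structuredLaw mx my ms PX θ) (fun ω => (sSubX ω.1, Fin.castLE hle ω.1.1)) wy := by
    rintro ⟨w, y⟩
    rw [structuredLaw, pr_channelLaw_pair, pr_sSubX, xiOf_mul_bstar hxy hPX hθ,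
      ← structuredLaw, pr_structuredLaw_fst hxy hPX hθ (fun a => (sSubX a, Fin.castLE hle a.1)),
      pr_sSubX_castLE hxy]
  rw [mutInfo_congr hlaw]
  exact mutInfo_comp_right_injective _ _ _ (Fin.castLE_injective hle)

lemma sSubX_pair_injective :
    Function.Injective fun a : Fin (mx + 1) × Fin (ms + 1) => (sSubX a, a.1) := by
  rintro ⟨x, s⟩ ⟨x', s'⟩ h
  simp only [sSubX, Prod.mk.injEq] at h
  obtain ⟨hsub, rfl⟩ := h
  simp only [Prod.mk.injEq, true_and]
  exact Fin.ext (by omega)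

lemma mutInfo_structuredLaw_fst (hxy : mx ≤ my) (hPX : IsPMF PX) (hθ : IsPMF θ) :
    mutInfo (structuredLaw mx my ms PX θ) (fun ω => sSubX ω.1) (fun ω => ω.1.1)
      = ent (structuredLaw mx my ms PX θ) (fun ω => sSubX ω.1)
        - ent (structuredLaw mx my ms PX θ) (fun ω => ω.1.2) := by
  set q := structuredLaw mx my ms PX θ
  have hX : ∀ x, pr q (fun ω => ω.1.1) x = PX x := fun x =>
    (pr_structuredLaw_fst hxy hPX.1 hθ.1 Prod.fst x).trans (pr_mul_fst PX hθ.2 x)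
  have hS : ∀ s, pr q (fun ω => ω.1.2) s = θ s := fun s =>
    (pr_structuredLaw_fst hxy hPX.1 hθ.1 Prod.snd s).trans (pr_mul_snd hPX.2 θ s)
  have hindep : ∀ x s, pr q (fun ω => (ω.1.1, ω.1.2)) (x, s)
      = pr q (fun ω => ω.1.1) x * pr q (fun ω => ω.1.2) s := fun x s => by
    rw [hX, hS, pr_structuredLaw_fst hxy hPX.1 hθ.1 (fun a => (a.1, a.2))]
    exact pr_mul_pair PX θ x s
  have hq : ∑ ω, q ω = 1 := by
    rw [← sum_pr q (fun ω => ω.1.1 : _ → Fin (mx + 1))]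
    simp only [hX, hPX.2]
  have hWX : ent q (fun ω => (sSubX ω.1, ω.1.1)) = ent q (fun ω => (ω.1.1, ω.1.2)) :=
    ent_comp_injective q (fun ω => ω.1) (e := fun a => (sSubX a, a.1)) sSubX_pair_injective
  rw [mutInfo, hWX, ent_pair_eq_add_of_indep hq hindep]
  ring

end StructuredPolicy

/-- Under the structured policy `b*` w.r.t. `(θ, ξ)`, with `X ~ PX` and
`S ~ θ` independent, `W = S - X` and `Y | W ~ b*(· | W)`:
`I(W; Y) = I(W; X) = H(W) - H(S)`. -/
theorem structured_policy_mutInfo (mx my ms : ℕ) (hxy : mx ≤ my)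
    (PX : Fin (mx + 1) → ℝ) (hPX : IsPMF PX)
    (θ : Fin (ms + 1) → ℝ) (hθ : IsPMF θ) :
    let p : Fin (mx + 1) × Fin (ms + 1) × Fin (my + 1) → ℝ :=
      fun ω => PX ω.1 * θ ω.2.1 *
        bstar mx my ms PX θ (((ω.2.1 : ℕ) : ℤ) - ((ω.1 : ℕ) : ℤ)) ω.2.2
    let Wv : Fin (mx + 1) × Fin (ms + 1) × Fin (my + 1) → ℤ :=
      fun ω => ((ω.2.1 : ℕ) : ℤ) - ((ω.1 : ℕ) : ℤ)
    mutInfo p Wv (fun ω => ω.2.2) = mutInfo p Wv (fun ω => ω.1) ∧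
    mutInfo p Wv (fun ω => ω.1) = ent p Wv - ent p (fun ω => ω.2.1) := by
  intro p Wv
  -- `p` is `structuredLaw` read through `((x, s), y) ↦ (x, (s, y))`
  let e := Equiv.prodAssoc (Fin (mx + 1)) (Fin (ms + 1)) (Fin (my + 1))
  rw [← mutInfo_comp_equiv e p Wv, ← mutInfo_comp_equiv e p Wv, ← ent_comp_equiv e p Wv,
    ← ent_comp_equiv e p]
  exact ⟨mutInfo_structuredLaw_snd hxy hPX.1 hθ.1, mutInfo_structuredLaw_fst hxy hPX hθ⟩
end SmartMeter
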